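/- The series whose terms are 1/( a²·c²·(a+c)² ), summed over all pairs (a,c) of positive integers with gcd(a,c) = 1, converges and its sum equals 1/3. -/

import Mathlib

/-!
Every positive coprime pair other than `(1, 1)` is obtained from exactly one positive coprime
pair `(a, c)` as `(a + c, c)` or as `(a, a + c)` (run Euclid's algorithm backwards). The summand
at `(a, c)` equals `g (a, c) - g (a + c, c) - g (a, a + c)` with `g (a, c) = 1 / (3 a³ c³)`, and
`g` is absolutely summable, so the series telescopes to `g (1, 1) = 1 / 3`.
-/

/-- Clearing denominators, this is `(a + c)³ - a³ - c³ = 3ac(a + c)`. -/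
lemma one_div_sq_mul_sq_mul_add_sq_eq {a c : ℝ} (ha : a ≠ 0) (hc : c ≠ 0) (hac : a + c ≠ 0) :
    1 / (a ^ 2 * c ^ 2 * (a + c) ^ 2) =
      1 / (3 * a ^ 3 * c ^ 3) - 1 / (3 * (a + c) ^ 3 * c ^ 3) - 1 / (3 * a ^ 3 * (a + c) ^ 3) := by
  field_simp
  ring

abbrev PosCoprimePair : Type := {p : ℤ × ℤ // 0 < p.1 ∧ 0 < p.2 ∧ IsCoprime p.1 p.2}

namespace PosCoprimePair

def root : PosCoprimePair := ⟨(1, 1), one_pos, one_pos, isCoprime_one_left⟩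

def childFst (p : PosCoprimePair) : PosCoprimePair :=
  ⟨(p.1.1 + p.1.2, p.1.2), add_pos p.2.1 p.2.2.1, p.2.2.1,
    by simpa using p.2.2.2.add_mul_right_left 1⟩

def childSnd (p : PosCoprimePair) : PosCoprimePair :=
  ⟨(p.1.1, p.1.1 + p.1.2), p.2.1, add_pos p.2.1 p.2.2.1,
    by simpa [add_comm] using p.2.2.2.add_mul_right_right 1⟩

lemma ext_iff {p q : PosCoprimePair} : p = q ↔ p.1.1 = q.1.1 ∧ p.1.2 = q.1.2 := by
  rw [Subtype.ext_iff, Prod.ext_iff]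

lemma childFst_injective : Function.Injective childFst := fun p q h => by
  simp only [childFst, ext_iff] at h ⊢
  omega

lemma childSnd_injective : Function.Injective childSnd := fun p q h => by
  simp only [childSnd, ext_iff] at h ⊢
  omega

lemma childFst_ne_root (p : PosCoprimePair) : p.childFst ≠ root := by
  rw [Ne, ext_iff]
  simp only [childFst, root]
  obtain ⟨ha, hc, -⟩ := p.2
  omega

lemma childSnd_ne_root (p : PosCoprimePair) : p.childSnd ≠ root := by
  rw [Ne, ext_iff]
  simp only [childSnd, root]
  obtain ⟨ha, hc, -⟩ := p.2
  omega

lemma childFst_ne_childSnd (p q : PosCoprimePair) : p.childFst ≠ q.childSnd := by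
  rw [Ne, ext_iff]
  simp only [childFst, childSnd]
  obtain ⟨hp, -⟩ := p.2
  obtain ⟨-, hq, -⟩ := q.2
  omega

lemma eq_root_or_childFst_or_childSnd (p : PosCoprimePair) :
    p = root ∨ (∃ q : PosCoprimePair, q.childFst = p) ∨ ∃ q : PosCoprimePair, q.childSnd = p := by
  obtain ⟨⟨a, c⟩, ha, hc, hac⟩ := p
  rcases lt_trichotomy a c with hlt | rfl | hgt
  · refine Or.inr (Or.inr ⟨⟨(a, c - a), ha, sub_pos.mpr hlt, ?_⟩, ?_⟩)
    · simpa [sub_eq_add_neg] using hac.add_mul_left_right (-1)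
    · simp [childSnd]
  · left
    obtain rfl : a = 1 := by
      rcases Int.isUnit_iff.mp (isCoprime_self.mp hac) with h | h <;> omega
    rfl
  · refine Or.inr (Or.inl ⟨⟨(a - c, c), sub_pos.mpr hgt, hc, ?_⟩, ?_⟩)
    · simpa [sub_eq_add_neg] using hac.add_mul_left_left (-1)
    · simp [childFst]

def rootOrChild : Unit ⊕ (PosCoprimePair ⊕ PosCoprimePair) → PosCoprimePair :=
  Sum.elim (fun _ => root) (Sum.elim childFst childSnd)

lemma rootOrChild_bijective : Function.Bijective rootOrChild := by
  refine ⟨?_, fun p => ?_⟩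
  · rintro (⟨⟩ | p | p) (⟨⟩ | q | q) h <;>
      simp only [rootOrChild, Sum.elim_inl, Sum.elim_inr] at h
    · rfl
    · exact absurd h.symm (childFst_ne_root q)
    · exact absurd h.symm (childSnd_ne_root q)
    · exact absurd h (childFst_ne_root p)
    · rw [childFst_injective h]
    · exact absurd h (childFst_ne_childSnd p q)
    · exact absurd h (childSnd_ne_root p)
    · exact absurd h.symm (childFst_ne_childSnd q p)
    · rw [childSnd_injective h]
  · rcases eq_root_or_childFst_or_childSnd p with rfl | ⟨q, rfl⟩ | ⟨q, rfl⟩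
    exacts [⟨.inl (), rfl⟩, ⟨.inr (.inl q), rfl⟩, ⟨.inr (.inr q), rfl⟩]

theorem hasSum_sub_childFst_sub_childSnd {E : Type*} [NormedAddCommGroup E]
    [CompleteSpace E] {g : PosCoprimePair → E} (hg : Summable g) :
    HasSum (fun p => g p - g p.childFst - g p.childSnd) (g root) := by
  have hFst := (hg.comp_injective childFst_injective).hasSum
  have hSnd := (hg.comp_injective childSnd_injective).hasSum
  have hsplit : HasSum g (g root + ((∑' p, g (childFst p)) + ∑' p, g (childSnd p))) :=
    (Equiv.ofBijective _ rootOrChild_bijective).hasSum_iff.mp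
      ((hasSum_unique _).sum (hFst.sum hSnd))
  have hroot : g root = ∑' p, g p - ∑' p, g (childFst p) - ∑' p, g (childSnd p) := by
    rw [hsplit.tsum_eq]
    abel
  rw [hroot]
  exact (hg.hasSum.sub hFst).sub hSnd

end PosCoprimePair

lemma summable_one_div_mul_cube_mul_cube :
    Summable fun p : ℤ × ℤ => 1 / (3 * (p.1 : ℝ) ^ 3 * (p.2 : ℝ) ^ 3) := by
  have h : Summable fun n : ℤ => ‖1 / (n : ℝ) ^ 3‖ :=
    (Real.summable_one_div_int_pow.mpr (by norm_num)).norm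
  refine ((summable_mul_of_summable_norm h h).mul_left (1 / 3)).congr fun p => ?_
  ring

theorem stmt_11 :
    HasSum
      (fun p : {p : ℤ × ℤ // 0 < p.1 ∧ 0 < p.2 ∧ IsCoprime p.1 p.2} =>
        1 / ((p.val.1 : ℝ) ^ 2 * (p.val.2 : ℝ) ^ 2 *
          ((p.val.1 : ℝ) + (p.val.2 : ℝ)) ^ 2))
      (1 / 3) := by
  have key := PosCoprimePair.hasSum_sub_childFst_sub_childSnd
    (g := fun p => 1 / (3 * (p.1.1 : ℝ) ^ 3 * (p.1.2 : ℝ) ^ 3))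
    (summable_one_div_mul_cube_mul_cube.subtype _)
  simp only [PosCoprimePair.root, Int.cast_one, one_pow, mul_one] at key
  refine key.congr_fun fun ⟨⟨a, c⟩, ha, hc, _⟩ => ?_
  have ha' : (0 : ℝ) < a := by exact_mod_cast ha
  have hc' : (0 : ℝ) < c := by exact_mod_cast hc
  simp only [PosCoprimePair.childFst, PosCoprimePair.childSnd]
  push_cast
  exact one_div_sq_mul_sq_mul_add_sq_eq ha'.ne' hc'.ne' (by positivity)
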